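/- arXiv:1812.10987 — 5 statements merged into one kernel-verified Lean document; each statement's English description precedes it below -/
import Mathlib

section
/- Let S = {y ∈ ℝⁿ | g₁(y) ≥ 0, …, g_s(y) ≥ 0} and define S̃_> = {(y₀,y) ∈ ℝ^{n+1} | gⱼ^hom(y₀,y) ≥ 0 for all j, y₀ > 0, y₀² + ‖y‖² = 1}. Then for any polynomial g ∈ ℝ[y], g(y) ≥ 0 for all y ∈ S if and only if g^hom(ỹ) ≥ 0 for all ỹ in the closure of S̃_>. -/
open MvPolynomial

lemma homog_eval_smul {N : ℕ} (p : MvPolynomial (Fin N) ℝ) (d : ℕ)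
    (hp : p.IsHomogeneous d) (c : ℝ) (x : Fin N → ℝ) :
    eval (c • x) p = c ^ d * eval x p := by
  rw [eval_eq, eval_eq, Finset.mul_sum]
  apply Finset.sum_congr rfl
  intro m hm
  have hd : ∑ i ∈ m.support, m i = d := by
    have := hp (mem_support_iff.mp hm)
    simpa [Finsupp.weight, Finsupp.sum, Finsupp.linearCombination] using this
  rw [← hd]
  simp only [Pi.smul_apply, smul_eq_mul, mul_pow]
  rw [Finset.prod_mul_distrib, Finset.prod_pow_eq_pow_sum]
  ring

theorem nonneg_on_S_iff_nonneg_on_closure (n s : ℕ)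
    (g : Fin s → MvPolynomial (Fin n) ℝ)
    (ghom : Fin s → MvPolynomial (Fin (n + 1)) ℝ)
    (hghom : ∀ j, (ghom j).IsHomogeneous (g j).totalDegree)
    (hgdehom : ∀ j (y : Fin n → ℝ), eval (Fin.cons 1 y) (ghom j) = eval y (g j))
    (q : MvPolynomial (Fin n) ℝ)
    (qhom : MvPolynomial (Fin (n + 1)) ℝ)
    (hqhom : qhom.IsHomogeneous q.totalDegree)
    (hqdehom : ∀ y : Fin n → ℝ, eval (Fin.cons 1 y) qhom = eval y q) :
    (∀ y : Fin n → ℝ, (∀ j, 0 ≤ eval y (g j)) → 0 ≤ eval y q) ↔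
    (∀ ytil ∈ closure {ytil : Fin (n + 1) → ℝ |
        (∀ j, 0 ≤ eval ytil (ghom j)) ∧ 0 < ytil 0 ∧ ∑ i, ytil i ^ 2 = 1},
      0 ≤ eval ytil qhom) := by
  constructor
  · intro h ytil hytil
    have hC : IsClosed {z : Fin (n+1) → ℝ | 0 ≤ eval z qhom} :=
      isClosed_le continuous_const (MvPolynomial.continuous_eval qhom)
    refine closure_minimal ?_ hC hytil
    rintro z ⟨hz1, hz2, -⟩
    set t := z 0 with ht
    have htne : t ≠ 0 := ne_of_gt hz2
    set y : Fin n → ℝ := fun i => z i.succ / t with hy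
    have hzy : z = t • (Fin.cons 1 y : Fin (n+1) → ℝ) := by
      funext i
      refine Fin.cases ?_ (fun k => ?_) i
      · simp [ht]
      · simp [hy, Fin.cons_succ, mul_div_cancel₀ _ htne]
    have hgy : ∀ j, 0 ≤ eval y (g j) := by
      intro j
      have := hz1 j
      rw [hzy, homog_eval_smul _ _ (hghom j), hgdehom j] at this
      have hpos : 0 < t ^ (g j).totalDegree := pow_pos hz2 _
      nlinarith
    have := h y hgy
    rw [hzy, Set.mem_setOf_eq, homog_eval_smul _ _ hqhom, hqdehom]
    positivity
  · intro h y hy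
    have hsum : (0:ℝ) ≤ ∑ i, y i ^ 2 := Finset.sum_nonneg fun i _ => sq_nonneg _
    set r : ℝ := Real.sqrt (1 + ∑ i, y i ^ 2) with hr
    have hrpos : 0 < r := Real.sqrt_pos.mpr (by linarith)
    have hr2 : r ^ 2 = 1 + ∑ i, y i ^ 2 := Real.sq_sqrt (by linarith)
    set t : ℝ := 1 / r with htdef
    have htpos : 0 < t := by positivity
    set ytil : Fin (n+1) → ℝ := t • (Fin.cons 1 y : Fin (n+1) → ℝ) with hytil
    have hmem : ytil ∈ {ytil : Fin (n + 1) → ℝ |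
        (∀ j, 0 ≤ eval ytil (ghom j)) ∧ 0 < ytil 0 ∧ ∑ i, ytil i ^ 2 = 1} := by
      refine ⟨fun j => ?_, ?_, ?_⟩
      · rw [hytil, homog_eval_smul _ _ (hghom j), hgdehom j]
        exact mul_nonneg (le_of_lt (pow_pos htpos _)) (hy j)
      · simpa [hytil] using htpos
      · have : ∑ i, ytil i ^ 2 = t ^ 2 * (1 + ∑ i, y i ^ 2) := by
          rw [Fin.sum_univ_succ]
          simp [hytil, mul_pow, Finset.mul_sum]
          rw [mul_add, mul_one, Finset.mul_sum]
        rw [this, ← hr2, htdef]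
        field_simp
    have := h ytil (subset_closure hmem)
    rw [hytil, homog_eval_smul _ _ hqhom, hqdehom] at this
    have hpos : 0 < t ^ q.totalDegree := pow_pos htpos _
    nlinarith
end

section
/- Suppose there exists u ∈ ℝᵐ with p(u,y) > 0 for all y ∈ S and p̂(u,y) > 0 for all y ∈ Ŝ, where p̂ is the top-degree homogeneous part of p in y and Ŝ = {y | ĝⱼ(y) ≥ 0 ∀j, ‖y‖² = 1}. Then p^hom(u, ỹ) > 0 for every ỹ = (y₀,y) ∈ S̃ = {ỹ | gⱼ^hom(ỹ) ≥ 0 ∀j, y₀ ≥ 0, ‖ỹ‖² = 1}. That is, the extended Slater condition for K implies the Slater condition for K̃. -/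
theorem extended_slater_implies_slater_homog (m n s : ℕ)
    (g : Fin s → (Fin n → ℝ) → ℝ) (ghat : Fin s → (Fin n → ℝ) → ℝ)
    (gh : Fin s → (Fin (n + 1) → ℝ) → ℝ) (dg : Fin s → ℕ)
    (hgh0 : ∀ j (y : Fin n → ℝ), gh j (Fin.cons 0 y) = ghat j y)
    (hghpos : ∀ j (y₀ : ℝ) (y : Fin n → ℝ), 0 < y₀ →
      gh j (Fin.cons y₀ y) = y₀ ^ dg j * g j (y₀⁻¹ • y))
    (p phat : (Fin m → ℝ) → (Fin n → ℝ) → ℝ)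
    (phom : (Fin m → ℝ) → (Fin (n + 1) → ℝ) → ℝ) (dy : ℕ)
    (hp0 : ∀ x (y : Fin n → ℝ), phom x (Fin.cons 0 y) = phat x y)
    (hppos : ∀ x (y₀ : ℝ) (y : Fin n → ℝ), 0 < y₀ →
      phom x (Fin.cons y₀ y) = y₀ ^ dy * p x (y₀⁻¹ • y))
    (u : Fin m → ℝ)
    (hS : ∀ y : Fin n → ℝ, (∀ j, 0 ≤ g j y) → 0 < p u y)
    (hShat : ∀ y : Fin n → ℝ, (∀ j, 0 ≤ ghat j y) → (∑ i, y i ^ 2 = 1) →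
      0 < phat u y) :
    ∀ ytil : Fin (n + 1) → ℝ, (∀ j, 0 ≤ gh j ytil) → 0 ≤ ytil 0 →
      (∑ i, ytil i ^ 2 = 1) → 0 < phom u ytil := by
  intro ytil hgS hy0 hnorm
  have hcons : Fin.cons (ytil 0) (Fin.tail ytil) = ytil := Fin.cons_self_tail ytil
  rcases eq_or_lt_of_le hy0 with h0 | h0
  · -- y₀ = 0
    have h0' : ytil 0 = 0 := h0.symm
    have hph : phom u ytil = phat u (Fin.tail ytil) := by
      rw [← hcons, h0', hp0]; simp
    rw [hph]
    apply hShat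
    · intro j
      have := hgS j
      rw [← hcons, h0', hgh0] at this
      exact this
    · have : ∑ i : Fin (n+1), ytil i ^ 2 = ytil 0 ^ 2 + ∑ i : Fin n, ytil i.succ ^ 2 :=
        Fin.sum_univ_succ _
      rw [this, h0'] at hnorm
      simpa [Fin.tail] using hnorm
  · -- y₀ > 0
    have hph : phom u ytil = (ytil 0) ^ dy * p u ((ytil 0)⁻¹ • Fin.tail ytil) := by
      rw [← hcons, hppos u _ _ h0]; simp
    rw [hph]
    apply mul_pos (pow_pos h0 _)
    apply hS
    intro j
    have hj := hgS j
    rw [← hcons, hghpos j _ _ h0] at hj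
    exact nonneg_of_mul_nonneg_right hj (pow_pos h0 _)
end

section
/- Conversely, suppose u ∈ ℝᵐ satisfies p^hom(u,ỹ) > 0 for all ỹ ∈ S̃. Then p(u,y) > 0 for all y ∈ S and p̂(u,y) > 0 for all y ∈ Ŝ. (Slater condition for K̃ implies the extended Slater condition for K.) -/
theorem slater_homog_implies_extended_slater (m n s : ℕ)
    (g : Fin s → (Fin n → ℝ) → ℝ) (ghat : Fin s → (Fin n → ℝ) → ℝ)
    (gh : Fin s → (Fin (n + 1) → ℝ) → ℝ) (dg : Fin s → ℕ)
    (hgh0 : ∀ j (y : Fin n → ℝ), gh j (Fin.cons 0 y) = ghat j y)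
    (hghpos : ∀ j (y₀ : ℝ) (y : Fin n → ℝ), 0 < y₀ →
      gh j (Fin.cons y₀ y) = y₀ ^ dg j * g j (y₀⁻¹ • y))
    (p phat : (Fin m → ℝ) → (Fin n → ℝ) → ℝ)
    (phom : (Fin m → ℝ) → (Fin (n + 1) → ℝ) → ℝ) (dy : ℕ)
    (hp0 : ∀ x (y : Fin n → ℝ), phom x (Fin.cons 0 y) = phat x y)
    (hppos : ∀ x (y₀ : ℝ) (y : Fin n → ℝ), 0 < y₀ →
      phom x (Fin.cons y₀ y) = y₀ ^ dy * p x (y₀⁻¹ • y))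
    (u : Fin m → ℝ)
    (hStil : ∀ ytil : Fin (n + 1) → ℝ, (∀ j, 0 ≤ gh j ytil) → 0 ≤ ytil 0 →
      (∑ i, ytil i ^ 2 = 1) → 0 < phom u ytil) :
    (∀ y : Fin n → ℝ, (∀ j, 0 ≤ g j y) → 0 < p u y) ∧
    (∀ y : Fin n → ℝ, (∀ j, 0 ≤ ghat j y) → (∑ i, y i ^ 2 = 1) →
      0 < phat u y) := by
  constructor
  · intro y hy
    set t : ℝ := 1 + ∑ i, y i ^ 2 with ht
    have htpos : 0 < t := by
      have : 0 ≤ ∑ i, y i ^ 2 := Finset.sum_nonneg fun i _ => sq_nonneg _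
      linarith
    set c : ℝ := (Real.sqrt t)⁻¹ with hc
    have hcpos : 0 < c := inv_pos.mpr (Real.sqrt_pos.mpr htpos)
    have hc2 : c ^ 2 * t = 1 := by
      rw [hc, inv_pow, Real.sq_sqrt htpos.le]
      exact inv_mul_cancel₀ htpos.ne'
    have hback : c⁻¹ • (c • y) = y := by
      rw [smul_smul, inv_mul_cancel₀ hcpos.ne', one_smul]
    have key := hStil (Fin.cons c (c • y)) ?_ ?_ ?_
    · rw [hppos u c (c • y) hcpos, hback] at key
      nlinarith [key, pow_pos hcpos dy]
    · intro j
      rw [hghpos j c (c • y) hcpos, hback]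
      exact mul_nonneg (pow_pos hcpos (dg j)).le (hy j)
    · simpa using hcpos.le
    · rw [Fin.sum_univ_succ]
      simp only [Fin.cons_zero, Fin.cons_succ, Pi.smul_apply, smul_eq_mul, mul_pow]
      rw [← Finset.mul_sum]
      nlinarith [hc2]
  · intro y hy hsum
    have key := hStil (Fin.cons 0 y) ?_ ?_ ?_
    · rwa [hp0] at key
    · intro j; rw [hgh0]; exact hy j
    · simp
    · rw [Fin.sum_univ_succ]; simpa using hsum
end

section
/- Suppose that for every a ∈ ℝᵐ, b ∈ ℝ with aᵀx - b ≥ 0 on K there exist q̃ ∈ ℝ[x], points y₁,…,y_l ∈ S and λⱼ ≥ 0 such that aᵀx - b = q̃(x)² + Σⱼ λⱼ p(x,yⱼ) identically. Then any point v ∈ Λ_{r,t} (i.e., v = (L(x₁),…,L(x_m)) for a feasible functional L with L(q̃²) ≥ 0, deg q̃² ≤ 2r, and L(p(x,yⱼ)) ≥ 0) satisfies aᵀv - b ≥ 0 for every such (a,b); hence Λ_{r,t} ⊆ K if K is closed and convex. -/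
theorem Lambda_subset_K_of_sos_representation (m n : ℕ)
    (S : Set (Fin n → ℝ)) (p : (Fin m → ℝ) → (Fin n → ℝ) → ℝ)
    (K : Set (Fin m → ℝ)) (hK : K = {x | ∀ y ∈ S, 0 ≤ p x y})
    (hKclosed : IsClosed K) (hKconv : Convex ℝ K)
    (hSOS : ∀ (a : Fin m → ℝ) (b : ℝ),
      (∀ x ∈ K, 0 ≤ (∑ i, a i * x i) - b) →
      ∃ (qt : (Fin m → ℝ) → ℝ) (l : ℕ) (y : Fin l → Fin n → ℝ)
        (lam : Fin l → ℝ),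
        (∀ j, y j ∈ S) ∧ (∀ j, 0 ≤ lam j) ∧
        ∀ x : Fin m → ℝ,
          (∑ i, a i * x i) - b = qt x ^ 2 + ∑ j, lam j * p x (y j))
    (v : Fin m → ℝ)
    (hv : ∃ L : ((Fin m → ℝ) → ℝ) →ₗ[ℝ] ℝ,
      (∀ i, L (fun x => x i) = v i) ∧ L (fun _ => 1) = 1 ∧
      (∀ q : (Fin m → ℝ) → ℝ, 0 ≤ L (fun x => q x ^ 2)) ∧
      (∀ y ∈ S, 0 ≤ L (fun x => p x y))) :
    v ∈ K := by
  obtain ⟨L, hLx, hL1, hLsq, hLp⟩ := hv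
  by_contra hvK
  obtain ⟨f, u, hfK, hfv⟩ := geometric_hahn_banach_closed_point hKconv hKclosed hvK
  set a : Fin m → ℝ := fun i => -f (Pi.single i 1) with ha
  have hfx : ∀ x : Fin m → ℝ, f x = ∑ i, x i * f (Pi.single i 1) := by
    intro x
    have hx : x = ∑ i, x i • (Pi.single i 1 : Fin m → ℝ) := by
      ext j
      simp [Pi.single_apply, Finset.sum_apply]
    conv_lhs => rw [hx]
    simp [smul_eq_mul]
  have hab : ∀ x ∈ K, 0 ≤ (∑ i, a i * x i) - (-u) := by
    intro x hx
    have hax : ∑ i, a i * x i = -f x := by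
      rw [hfx x, ← Finset.sum_neg_distrib]
      exact Finset.sum_congr rfl fun i _ => by simp [ha]; ring
    rw [hax]
    have h2 := hfK x hx
    linarith
  obtain ⟨qt, l, y, lam, hyS, hlam, hid⟩ := hSOS a (-u) hab
  -- apply L to the identity
  have hfun : (fun x : Fin m → ℝ => (∑ i, a i * x i) - (-u)) =
      (∑ i, a i • (fun x : Fin m → ℝ => x i)) - (-u) • (fun _ => (1 : ℝ)) := by
    funext x
    simp [Finset.sum_apply, smul_eq_mul]
  have hfun2 : (fun x : Fin m → ℝ => (∑ i, a i * x i) - (-u)) =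
      (fun x => qt x ^ 2) + ∑ j, lam j • (fun x : Fin m → ℝ => p x (y j)) := by
    funext x
    simp only [Pi.add_apply, Finset.sum_apply, Pi.smul_apply, smul_eq_mul]
    exact hid x
  have hLlhs : L (fun x : Fin m → ℝ => (∑ i, a i * x i) - (-u)) =
      (∑ i, a i * v i) + u := by
    rw [hfun, map_sub, map_sum, map_smul, hL1]
    simp only [map_smul, smul_eq_mul]
    rw [Finset.sum_congr rfl fun i _ => by rw [hLx i]]
    ring
  have hLrhs : L (fun x : Fin m → ℝ => (∑ i, a i * x i) - (-u)) =
      L (fun x => qt x ^ 2) + ∑ j, lam j * L (fun x : Fin m → ℝ => p x (y j)) := by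
    rw [hfun2, map_add, map_sum]
    simp only [map_smul, smul_eq_mul]
  have hpos : 0 ≤ (∑ i, a i * v i) + u := by
    rw [← hLlhs, hLrhs]
    have h1 := hLsq qt
    have h2 : 0 ≤ ∑ j, lam j * L (fun x : Fin m → ℝ => p x (y j)) :=
      Finset.sum_nonneg fun j _ => mul_nonneg (hlam j) (hLp (y j) (hyS j))
    linarith
  have hav : ∑ i, a i * v i = -f v := by
    rw [hfx v]
    rw [← Finset.sum_neg_distrib]
    exact Finset.sum_congr rfl fun i _ => by simp [ha]; ring
  rw [hav] at hpos
  linarith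
end

section
/- Let L* be a linear functional on polynomials with L*(1) = 1 that admits a representing probability measure ν on ℝᵐ (L*(x^α) = ∫ x^α dν), and let f be a convex polynomial. If the point u := (L*(x₁),…,L*(x_m)) (the barycenter of ν) lies in K and L*(f) = f* = inf_{x∈K} f(x), then f(u) = f*, i.e., u is a minimizer of f over K. -/
open MeasureTheory

theorem barycenter_is_minimizer (m : ℕ)
    (K : Set (Fin m → ℝ)) (f : (Fin m → ℝ) → ℝ)
    (hf : ConvexOn ℝ Set.univ f) (hfc : Continuous f)
    (ν : Measure (Fin m → ℝ)) [IsProbabilityMeasure ν]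
    (hfint : Integrable f ν)
    (hxint : ∀ i : Fin m, Integrable (fun x : Fin m → ℝ => x i) ν)
    (u : Fin m → ℝ) (hu : ∀ i, u i = ∫ x, x i ∂ν)
    (huK : u ∈ K)
    (fstar : ℝ) (hlb : ∀ x ∈ K, fstar ≤ f x)
    (hLf : (∫ x, f x ∂ν) = fstar) :
    f u = fstar := by
  have hsum : Integrable (fun x : Fin m → ℝ => ∑ i, |x i|) ν :=
    integrable_finset_sum _ fun i _ => (hxint i).abs
  have hid : Integrable (fun x : Fin m → ℝ => x) ν := by
    refine hsum.mono' measurable_id.aestronglyMeasurable (Filter.Eventually.of_forall fun x => ?_)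
    rw [pi_norm_le_iff_of_nonneg (Finset.sum_nonneg fun i _ => abs_nonneg _)]
    intro i
    calc ‖x i‖ = |x i| := rfl
    _ ≤ ∑ j, |x j| := Finset.single_le_sum (f := fun j => |x j|) (fun j _ => abs_nonneg _) (Finset.mem_univ i)
  have hu' : u = ∫ x, x ∂ν := by
    funext i
    rw [hu i]
    simpa using ((ContinuousLinearMap.proj (R := ℝ) (φ := fun _ : Fin m => ℝ) i).integral_comp_comm hid)
  have hJ : f u ≤ fstar := by
    rw [hu', ← hLf]
    exact hf.map_integral_le hfc.continuousOn isClosed_univ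
      (Filter.Eventually.of_forall fun _ => trivial) hid hfint
  exact le_antisymm hJ (hlb u huK)
end
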